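/- Let φ > 0 and let a, aₖ, u₁, u₂, uₖ be real numbers with u₁ ≥ 0. Define ĝ(a, u₂) = (aₖ·a)/2 − aₖ²/4 + 2φ·uₖ·u₂ − φ·uₖ². If the second-order cone inequality a²/4 + φ·u₂² ≤ φ·u₁² holds and the linearized constraint φ·u₁² ≤ ĝ(a, u₂) holds (i.e. the slack in the linearized convex-concave inequality is zero), then the Weymouth equality a²/4 = φ·(u₁² − u₂²) holds exactly, and moreover a = aₖ and u₂ = uₖ. -/
import Mathlib

/-- For φ > 0 and u₁ ≥ 0, if the second-order cone inequality
`a²/4 + φ·u₂² ≤ φ·u₁²` holds and the linearized constraint `φ·u₁² ≤ ĝ(a,u₂)`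
holds, where `ĝ(a,u₂) = (aₖ·a)/2 − aₖ²/4 + 2φ·uₖ·u₂ − φ·uₖ²`, then the Weymouth
equality `a²/4 = φ·(u₁² − u₂²)` holds exactly, and moreover a = aₖ, u₂ = uₖ. -/
theorem zero_slack_implies_exact (φ a aₖ u₁ u₂ uₖ : ℝ) (hφ : 0 < φ)
    (hu₁ : 0 ≤ u₁)
    (hsoc : a ^ 2 / 4 + φ * u₂ ^ 2 ≤ φ * u₁ ^ 2)
    (hlin : φ * u₁ ^ 2 ≤ (aₖ * a) / 2 - aₖ ^ 2 / 4 + 2 * φ * uₖ * u₂ - φ * uₖ ^ 2) :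
    a ^ 2 / 4 = φ * (u₁ ^ 2 - u₂ ^ 2) ∧ a = aₖ ∧ u₂ = uₖ := by
  have h := hsoc.trans hlin
  have ha : (a - aₖ) ^ 2 = 0 := by
    nlinarith [sq_nonneg (a - aₖ), mul_nonneg hφ.le (sq_nonneg (u₂ - uₖ))]
  have hu : (u₂ - uₖ) ^ 2 = 0 := by
    nlinarith [sq_nonneg (u₂ - uₖ), sq_nonneg (a - aₖ),
      mul_nonneg hφ.le (sq_nonneg (u₂ - uₖ))]
  have ha' : a = aₖ := by have := pow_eq_zero_iff (n := 2) (by norm_num) |>.mp ha; linarith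
  have hu' : u₂ = uₖ := by have := pow_eq_zero_iff (n := 2) (by norm_num) |>.mp hu; linarith
  refine ⟨?_, ha', hu'⟩
  subst ha' hu'
  nlinarith [hsoc, hlin]
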